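/- arXiv:1503.01346 — 4 statements merged into one kernel-verified Lean document; each statement's English description precedes it below -/
import Mathlib

section
/- Let n be a positive natural number and let Δ : Mₙ(ℂ) → Mₙ(ℂ) be a weak-2-local *-derivation on the C*-algebra Mₙ(ℂ) of n×n complex matrices. Then Δ is a ℂ-linear map and a derivation, i.e. Δ(x + y) = Δ(x) + Δ(y), Δ(λx) = λΔ(x) and Δ(xy) = Δ(x)y + xΔ(y) for all x, y ∈ Mₙ(ℂ) and λ ∈ ℂ. -/
/-!
Testing against continuous functionals shows that `Δ a + κ • Δ b` is the value at `a + κ • b` of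
some *-derivation, for every `κ : ℂ` (the values of *-derivations at a point form a real subspace,
and in finite dimension it is cut out by real parts of complex functionals). *-derivations preserve
self-adjoint and skew-adjoint elements, and an element that is both vanishes; well-chosen `a`, `b`,
`κ` therefore give complex homogeneity, additivity, and `Δ (x * x) = Δ x * x + x * Δ x` for
self-adjoint `x`, so by polarization `Δ` is a linear Jordan derivation.

Herstein's identity says that the Leibniz defect `δ = Δ (a * b) - Δ a * b - a * Δ b` of a Jordan
derivation satisfies `δ * m * [a, b] + [a, b] * m * δ = 0` for all `m`. In a matrix ring, testing
with matrix units forces `δ = 0` or `[a, b] = 0`. A commuting pair is handled by additivity of `δ`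
in `b`, adding a matrix unit that does not commute with `a`; one exists unless `a` is scalar, a case
settled by homogeneity and `Δ 1 = 0`.
-/

open scoped Matrix.Norms.L2Operator

/-- A (not necessarily linear) map `Δ` on `Mₙ(ℂ)` is a weak-2-local *-derivation if for all
`a b` and every continuous linear functional `φ` there is a *-derivation `D` (bundled as a
`ℂ`-linear map satisfying the Leibniz rule and commuting with the involution) such that
`φ (Δ a) = φ (D a)` and `φ (Δ b) = φ (D b)`. -/
def IsWeak2LocalStarDerivation {n : ℕ} (Δ : Matrix (Fin n) (Fin n) ℂ → Matrix (Fin n) (Fin n) ℂ) :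
    Prop :=
  ∀ (a b : Matrix (Fin n) (Fin n) ℂ) (φ : Matrix (Fin n) (Fin n) ℂ →L[ℂ] ℂ),
    ∃ D : Matrix (Fin n) (Fin n) ℂ →ₗ[ℂ] Matrix (Fin n) (Fin n) ℂ,
      (∀ x y, D (x * y) = D x * y + x * D y) ∧
      (∀ x, D (star x) = star (D x)) ∧
      φ (Δ a) = φ (D a) ∧ φ (Δ b) = φ (D b)

open Complex
open scoped ComplexStarModule

theorem Submodule.mem_of_forall_exists_strongDual_apply_eq {𝕜 E : Type*} [RCLike 𝕜]
    [NormedAddCommGroup E] [NormedSpace 𝕜 E] [Module ℝ E] [IsScalarTower ℝ 𝕜 E]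
    [FiniteDimensional 𝕜 E] {K : Submodule ℝ E} {x : E}
    (h : ∀ φ : StrongDual 𝕜 E, ∃ k ∈ K, φ x = φ k) : x ∈ K := by
  by_contra hx
  obtain ⟨f, hfx, hKf⟩ := K.exists_le_ker_of_notMem hx
  obtain ⟨k, hk, hxk⟩ :=
    h (LinearMap.toContinuousLinearMap (Module.Dual.extendRCLike (𝕜 := 𝕜) f))
  have hfxk : f x = f k := by
    simpa only [LinearMap.coe_toContinuousLinearMap', Module.Dual.re_extendRCLike_apply]
      using congrArg RCLike.re hxk
  exact hfx (hfxk.trans (hKf hk))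

theorem eq_zero_of_isSelfAdjoint_of_mem_skewAdjoint {A : Type*} [AddCommGroup A] [Module ℂ A]
    [StarAddMonoid A] {z : A} (hsa : IsSelfAdjoint z) (hskew : z ∈ skewAdjoint A) : z = 0 := by
  have hz : z = -z := hsa.symm.trans (skewAdjoint.mem_iff.mp hskew)
  have h2z : (2 : ℂ) • z = 0 := by rw [two_smul]; nth_rw 2 [hz]; exact add_neg_cancel z
  simpa using h2z

section StarDerivation

variable {A : Type*} [Ring A] [StarRing A] [Algebra ℂ A]

structure IsStarDerivation (D : A →ₗ[ℂ] A) : Prop where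
  map_mul : ∀ x y, D (x * y) = D x * y + x * D y
  map_star : ∀ x, D (star x) = star (D x)

namespace IsStarDerivation

theorem zero : IsStarDerivation (0 : A →ₗ[ℂ] A) := ⟨by simp, by simp⟩

theorem add {D E : A →ₗ[ℂ] A} (hD : IsStarDerivation D) (hE : IsStarDerivation E) :
    IsStarDerivation (D + E) where
  map_mul x y := by simp only [LinearMap.add_apply, hD.map_mul, hE.map_mul]; noncomm_ring
  map_star x := by simp [hD.map_star, hE.map_star]

theorem ofReal_smul [StarModule ℂ A] {D : A →ₗ[ℂ] A} (hD : IsStarDerivation D) (r : ℝ) :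
    IsStarDerivation ((r : ℂ) • D) where
  map_mul x y := by simp [hD.map_mul, smul_add]
  map_star x := by simp [hD.map_star, star_smul]

end IsStarDerivation

def starDerivationValues [StarModule ℂ A] (c : A) : Submodule ℝ A where
  carrier := {z | ∃ D, IsStarDerivation D ∧ D c = z}
  zero_mem' := ⟨0, .zero, rfl⟩
  add_mem' := by
    rintro _ _ ⟨D, hD, rfl⟩ ⟨E, hE, rfl⟩
    exact ⟨D + E, hD.add hE, rfl⟩
  smul_mem' := by
    rintro r _ ⟨D, hD, rfl⟩
    exact ⟨(r : ℂ) • D, hD.ofReal_smul r, Complex.coe_smul r (D c)⟩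

theorem isSelfAdjoint_of_mem_starDerivationValues [StarModule ℂ A] {c z : A}
    (hc : IsSelfAdjoint c) (hz : z ∈ starDerivationValues c) : IsSelfAdjoint z := by
  obtain ⟨D, hD, rfl⟩ := hz
  rw [IsSelfAdjoint, ← hD.map_star, hc.star_eq]

theorem mem_skewAdjoint_of_mem_starDerivationValues [StarModule ℂ A] {c z : A}
    (hc : c ∈ skewAdjoint A) (hz : z ∈ starDerivationValues c) : z ∈ skewAdjoint A := by
  obtain ⟨D, hD, rfl⟩ := hz
  rw [skewAdjoint.mem_iff, ← hD.map_star, skewAdjoint.mem_iff.mp hc, map_neg]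

end StarDerivation

def IsWeakTwoLocal {E : Type*} [NormedAddCommGroup E] [NormedSpace ℂ E]
    (P : (E →ₗ[ℂ] E) → Prop) (Δ : E → E) : Prop :=
  ∀ (a b : E) (φ : StrongDual ℂ E), ∃ D, P D ∧ φ (Δ a) = φ (D a) ∧ φ (Δ b) = φ (D b)

namespace IsWeakTwoLocal

theorem map_smul {E : Type*} [NormedAddCommGroup E] [NormedSpace ℂ E]
    {P : (E →ₗ[ℂ] E) → Prop} {Δ : E → E} (hΔ : IsWeakTwoLocal P Δ) (c : ℂ) (x : E) :
    Δ (c • x) = c • Δ x := by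
  rw [SeparatingDual.eq_iff_forall_dual_eq (R := ℂ)]
  intro φ
  obtain ⟨D, -, hcx, hx⟩ := hΔ (c • x) x φ
  rw [hcx, _root_.map_smul D, _root_.map_smul φ, _root_.map_smul φ, hx]

variable {A : Type*} [NormedRing A] [StarRing A] [NormedAlgebra ℂ A] [StarModule ℂ A]
  [FiniteDimensional ℂ A] {Δ : A → A} (hΔ : IsWeakTwoLocal IsStarDerivation Δ)
include hΔ

theorem add_smul_mem_starDerivationValues (a b : A) (κ : ℂ) :
    Δ a + κ • Δ b ∈ starDerivationValues (a + κ • b) :=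
  Submodule.mem_of_forall_exists_strongDual_apply_eq fun φ ↦ by
    obtain ⟨D, hD, ha, hb⟩ := hΔ a b φ
    exact ⟨D (a + κ • b), ⟨D, hD, rfl⟩, by simp [ha, hb]⟩

theorem mem_starDerivationValues (a : A) : Δ a ∈ starDerivationValues a := by
  simpa using hΔ.add_smul_mem_starDerivationValues a a 0

theorem map_add_sub_sub_mem_starDerivationValues (a b : A) (κ : ℂ) :
    Δ (a + b) - Δ a - Δ b ∈ starDerivationValues (a + κ • b) := by
  have h := hΔ.add_smul_mem_starDerivationValues (a + b) b (κ - 1)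
  rw [show a + b + (κ - 1) • b = a + κ • b by module] at h
  convert sub_mem h (hΔ.add_smul_mem_starDerivationValues a b κ) using 1
  module

theorem map_add_I_smul {u v : A} (hu : IsSelfAdjoint u) (hv : IsSelfAdjoint v) :
    Δ (u + I • v) = Δ u + I • Δ v := by
  have hsa : IsSelfAdjoint (Δ (u + I • v) - Δ u - Δ (I • v)) :=
    isSelfAdjoint_of_mem_starDerivationValues hu
      (by simpa using hΔ.map_add_sub_sub_mem_starDerivationValues u (I • v) 0)
  have hskew : Δ (u + I • v) - Δ u - Δ (I • v) ∈ skewAdjoint A := by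
    refine mem_skewAdjoint_of_mem_starDerivationValues
      (I_smul_mem_skewAdjoint_iff_isSelfAdjoint.mpr hv) ?_
    simpa [add_comm, sub_right_comm] using
      hΔ.map_add_sub_sub_mem_starDerivationValues (I • v) u 0
  rw [← hΔ.map_smul, ← sub_eq_zero, ← sub_sub]
  exact eq_zero_of_isSelfAdjoint_of_mem_skewAdjoint hsa hskew

theorem map_add_of_isSelfAdjoint {u v : A} (hu : IsSelfAdjoint u) (hv : IsSelfAdjoint v) :
    Δ (u + v) = Δ u + Δ v := by
  set Φ := Δ (u + v) - Δ u - Δ v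
  have hsa : IsSelfAdjoint Φ := isSelfAdjoint_of_mem_starDerivationValues hv
    (by simpa [add_comm, sub_right_comm] using hΔ.map_add_sub_sub_mem_starDerivationValues v u 0)
  -- The defect of the pair `u + I • v`, `v + I • u` is `(1 + I) • Φ`, a value at `I • (v + v)`.
  have hskew' : (1 + I) • Φ ∈ skewAdjoint A := by
    have h := hΔ.map_add_sub_sub_mem_starDerivationValues (u + I • v) (v + I • u) I
    rw [show u + I • v + (v + I • u) = (1 + I) • (u + v) by module,
      show u + I • v + I • (v + I • u) = I • (v + v) by
        simp only [smul_add, smul_smul, I_mul_I, neg_one_smul]; abel,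
      hΔ.map_smul, hΔ.map_add_I_smul hu hv, hΔ.map_add_I_smul hv hu] at h
    convert mem_skewAdjoint_of_mem_starDerivationValues
      (I_smul_mem_skewAdjoint_iff_isSelfAdjoint.mpr (hv.add hv)) h using 1
    module
  have hskew : Φ ∈ skewAdjoint A := by
    convert sub_mem hskew' (I_smul_mem_skewAdjoint_iff_isSelfAdjoint.mpr hsa) using 1
    module
  rw [← sub_eq_zero, ← sub_sub]
  exact eq_zero_of_isSelfAdjoint_of_mem_skewAdjoint hsa hskew

theorem map_add (x y : A) : Δ (x + y) = Δ x + Δ y := by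
  have hdecomp : ∀ z : A, Δ z = Δ (ℜ z) + I • Δ (ℑ z) := fun z ↦ by
    conv_lhs => rw [← realPart_add_I_smul_imaginaryPart z]
    exact hΔ.map_add_I_smul (ℜ z).2 (ℑ z).2
  rw [hdecomp, hdecomp x, hdecomp y, _root_.map_add, _root_.map_add, AddSubgroup.coe_add,
    AddSubgroup.coe_add, hΔ.map_add_of_isSelfAdjoint (ℜ x).2 (ℜ y).2,
    hΔ.map_add_of_isSelfAdjoint (ℑ x).2 (ℑ y).2]
  module

def toLinearMap : A →ₗ[ℂ] A where
  toFun := Δ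
  map_add' := hΔ.map_add
  map_smul' := hΔ.map_smul

theorem map_mul_self_of_isSelfAdjoint {x : A} (hx : IsSelfAdjoint x) :
    Δ (x * x) = Δ x * x + x * Δ x := by
  obtain ⟨D, hD, hDx⟩ := hΔ.add_smul_mem_starDerivationValues (x * x) x I
  rw [_root_.map_add, _root_.map_smul, hD.map_mul] at hDx
  have hxx : IsSelfAdjoint (x * x) := by rw [IsSelfAdjoint, star_mul, hx.star_eq]
  have hΔxx := isSelfAdjoint_of_mem_starDerivationValues hxx (hΔ.mem_starDerivationValues _)
  have hΔx := isSelfAdjoint_of_mem_starDerivationValues hx (hΔ.mem_starDerivationValues x)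
  have hDsa := isSelfAdjoint_of_mem_starDerivationValues hx ⟨D, hD, rfl⟩
  have hkey : Δ (x * x) - (D x * x + x * D x) = I • (D x - Δ x) := by
    rw [smul_sub, sub_eq_sub_iff_add_eq_add, ← hDx]; abel
  have hsa : IsSelfAdjoint (Δ (x * x) - (D x * x + x * D x)) := by
    rw [IsSelfAdjoint, star_sub, star_add, star_mul, star_mul, hx.star_eq, hDsa.star_eq,
      hΔxx.star_eq, add_comm (x * D x)]
  have hzero := eq_zero_of_isSelfAdjoint_of_mem_skewAdjoint hsa
    (hkey ▸ I_smul_mem_skewAdjoint_iff_isSelfAdjoint.mpr (hDsa.sub hΔx))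
  have hDΔ : D x = Δ x := by
    rw [hkey, smul_eq_zero] at hzero
    exact sub_eq_zero.mp (hzero.resolve_left I_ne_zero)
  rw [← hDΔ]
  exact sub_eq_zero.mp hzero

end IsWeakTwoLocal

def IsJordanDerivation {R : Type*} [Ring R] (d : R →+ R) : Prop :=
  ∀ a b, d (a * b + b * a) = d a * b + a * d b + d b * a + b * d a

theorem LinearMap.isJordanDerivation_of_map_mul_self {A : Type*} [Ring A] [StarRing A]
    [Algebra ℂ A] [StarModule ℂ A] (L : A →ₗ[ℂ] A)
    (h : ∀ x, IsSelfAdjoint x → L (x * x) = L x * x + x * L x) :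
    IsJordanDerivation (L : A →+ A) := by
  let J : A →ₗ[ℂ] A →ₗ[ℂ] A := LinearMap.mk₂ ℂ
    (fun a b ↦ L (a * b + b * a) - L a * b - a * L b - L b * a - b * L a)
    (fun a a' b ↦ by simp only [add_mul, mul_add, map_add]; abel)
    (fun c a b ↦ by simp only [smul_mul_assoc, mul_smul_comm, map_smul, ← smul_add, smul_sub])
    (fun a b b' ↦ by simp only [add_mul, mul_add, map_add]; abel)
    (fun c a b ↦ by simp only [smul_mul_assoc, mul_smul_comm, map_smul, ← smul_add, smul_sub])
  have hJ_comm : ∀ a b, J a b = J b a := fun a b ↦ by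
    simp only [J, LinearMap.mk₂_apply, add_comm (a * b)]; abel
  have hJ_self : ∀ u, IsSelfAdjoint u → J u u = 0 := fun u hu ↦ by
    simp only [J, LinearMap.mk₂_apply, map_add, h u hu]; abel
  have hJ_sa : ∀ u v : selfAdjoint A, J u v = 0 := fun u v ↦ by
    have h2 := hJ_self _ (u.2.add v.2)
    simp only [map_add, LinearMap.add_apply, hJ_self u u.2, hJ_self v v.2, hJ_comm (v : A),
      zero_add, add_zero, ← two_smul ℂ] at h2
    simpa using h2
  intro a b
  show L (a * b + b * a) = L a * b + a * L b + L b * a + b * L a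
  have hJ : J a b = 0 := by
    rw [← realPart_add_I_smul_imaginaryPart a, ← realPart_add_I_smul_imaginaryPart b]
    simp [hJ_sa]
  simpa only [J, LinearMap.mk₂_apply, sub_sub, sub_eq_zero] using hJ

def leibnizDefect {R : Type*} [Ring R] (d : R →+ R) (a b : R) : R :=
  d (a * b) - d a * b - a * d b

namespace IsJordanDerivation

variable {R : Type*} [Ring R] [IsAddTorsionFree R] {d : R →+ R} (hd : IsJordanDerivation d)
include hd

theorem map_mul_self (a : R) : d (a * a) = d a * a + a * d a := by
  refine nsmul_right_injective two_ne_zero ?_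
  simp only [two_nsmul, ← map_add, hd a a]
  abel

theorem map_sandwich (a b : R) : d (a * b * a) = d a * b * a + a * d b * a + a * b * d a := by
  have key : d (a * (a * b + b * a) + (a * b + b * a) * a)
      = d (a * a * b + b * (a * a)) + (d (a * b * a) + d (a * b * a)) := by
    rw [← map_add, ← map_add]; congr 1; noncomm_ring
  rw [hd, hd, hd, hd.map_mul_self] at key
  refine nsmul_right_injective two_ne_zero ?_
  simp only [two_nsmul]
  rw [eq_sub_of_add_eq' key.symm]
  noncomm_ring

theorem map_sandwich_add (a b c : R) :
    d (a * b * c + c * b * a)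
      = d a * b * c + a * d b * c + a * b * d c + d c * b * a + c * d b * a + c * b * d a := by
  have key : d ((a + c) * b * (a + c))
      = d (a * b * a) + d (c * b * c) + d (a * b * c + c * b * a) := by
    rw [← map_add, ← map_add]; congr 1; noncomm_ring
  rw [hd.map_sandwich, hd.map_sandwich, hd.map_sandwich, map_add] at key
  rw [eq_sub_of_add_eq' key.symm]
  noncomm_ring

theorem leibnizDefect_mul_mul_commutator_add_eq_zero (a b x : R) :
    leibnizDefect d a b * x * (a * b - b * a) + (a * b - b * a) * x * leibnizDefect d a b = 0 := by
  have hba : d (b * a) = d a * b + a * d b + d b * a + b * d a - d (a * b) :=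
    eq_sub_of_add_eq' ((map_add d _ _).symm.trans (hd a b))
  have key : d (a * b * x * (b * a) + b * a * x * (a * b))
      = d (a * (b * x * b) * a + b * (a * x * a) * b) := by
    congr 1; noncomm_ring
  rw [hd.map_sandwich_add, map_add, hd.map_sandwich, hd.map_sandwich,
    hd.map_sandwich, hd.map_sandwich, hba] at key
  refine Eq.trans ?_ (sub_eq_zero_of_eq key.symm)
  simp only [leibnizDefect]
  noncomm_ring

end IsJordanDerivation

namespace Matrix

variable {ι K : Type*} [Fintype ι] [DecidableEq ι]

instance {m n α : Type*} [AddMonoid α] [IsAddTorsionFree α] : IsAddTorsionFree (Matrix m n α) :=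
  inferInstanceAs (IsAddTorsionFree (m → n → α))

theorem mul_single_one_mul_apply [Semiring K] (x y : Matrix ι ι K) (i j k l : ι) :
    (x * single j k (1 : K) * y) i l = x i j * y k l := by
  rw [mul_apply, Finset.sum_eq_single k
    (fun m _ hm ↦ by simp [mul_single_apply_of_ne _ _ _ _ _ hm]) (by simp)]
  simp

theorem eq_zero_or_eq_zero_of_forall_mul_mul_add_mul_mul_eq_zero [CommRing K] [IsDomain K]
    [CharZero K] {x y : Matrix ι ι K} (h : ∀ m, x * m * y + y * m * x = 0) : x = 0 ∨ y = 0 := by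
  have hentry : ∀ i j k l, x i j * y k l + y i j * x k l = 0 := fun i j k l ↦ by
    simpa only [add_apply, mul_single_one_mul_apply, zero_apply] using
      congrFun₂ (h (single j k 1)) i l
  rw [or_iff_not_imp_right]
  intro hy
  obtain ⟨k, l, hkl⟩ : ∃ k l, y k l ≠ 0 := by
    by_contra! hy0
    exact hy (ext hy0)
  have hxkl : x k l = 0 := by
    have h2 := hentry k l k l
    rw [mul_comm (y k l), ← two_mul, mul_eq_zero, mul_eq_zero] at h2
    exact (h2.resolve_left two_ne_zero).resolve_right hkl
  ext i j
  simpa [hxkl, hkl] using hentry i j k l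

end Matrix

namespace IsJordanDerivation

variable {ι K : Type*} [Fintype ι] [DecidableEq ι] [CommRing K] [IsDomain K] [CharZero K]

theorem leibnizDefect_eq_zero_or_commute {d : Matrix ι ι K →+ Matrix ι ι K}
    (hd : IsJordanDerivation d) (a b : Matrix ι ι K) : leibnizDefect d a b = 0 ∨ Commute a b :=
  (Matrix.eq_zero_or_eq_zero_of_forall_mul_mul_add_mul_mul_eq_zero
    (hd.leibnizDefect_mul_mul_commutator_add_eq_zero a b)).imp_right sub_eq_zero.mp

end IsJordanDerivation

theorem LinearMap.map_mul_of_isJordanDerivation {ι K : Type*} [Fintype ι] [DecidableEq ι]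
    [CommRing K] [IsDomain K] [CharZero K] (L : Matrix ι ι K →ₗ[K] Matrix ι ι K)
    (hL : IsJordanDerivation (L : Matrix ι ι K →+ Matrix ι ι K)) (a b : Matrix ι ι K) :
    L (a * b) = L a * b + a * L b := by
  let δ := leibnizDefect (L : Matrix ι ι K →+ Matrix ι ι K) a
  have hδ_add : ∀ c c', δ (c + c') = δ c + δ c' := fun c c' ↦ by
    simp only [δ, leibnizDefect, mul_add, map_add]; abel
  have hδ : ∀ c, δ c = 0 ∨ Commute a c := hL.leibnizDefect_eq_zero_or_commute a
  suffices δ b = 0 by rw [← sub_eq_zero, ← sub_sub]; exact this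
  by_cases hscalar : Pairwise fun i j ↦ Commute (Matrix.single i j (1 : K)) a
  · obtain ⟨r, rfl⟩ := Matrix.mem_range_scalar_of_commute_single hscalar
    have hL1 : L 1 = 0 := by simpa using hL.map_mul_self 1
    have hr : Matrix.scalar ι r = r • 1 := (Matrix.smul_one_eq_diagonal r).symm
    simp [δ, leibnizDefect, hr, hL1]
  · obtain ⟨i, j, -, hij⟩ : ∃ i j, i ≠ j ∧ ¬Commute (Matrix.single i j (1 : K)) a := by
      simpa [Pairwise] using hscalar
    refine (hδ b).elim (fun hb ↦ hb) fun hab ↦ ?_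
    have hac : ¬Commute a (Matrix.single i j 1) := fun h ↦ hij h.symm
    have habc : ¬Commute a (b + Matrix.single i j 1) := fun h ↦
      hac (by simpa using h.sub_right hab)
    have h := hδ_add b (Matrix.single i j 1)
    rwa [(hδ _).resolve_right habc, (hδ _).resolve_right hac, add_zero, eq_comm] at h

theorem IsWeak2LocalStarDerivation.isWeakTwoLocal {n : ℕ}
    {Δ : Matrix (Fin n) (Fin n) ℂ → Matrix (Fin n) (Fin n) ℂ}
    (hΔ : IsWeak2LocalStarDerivation Δ) : IsWeakTwoLocal IsStarDerivation Δ := fun a b φ ↦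
  let ⟨D, hmul, hstar, ha, hb⟩ := hΔ a b φ
  ⟨D, ⟨hmul, hstar⟩, ha, hb⟩

theorem weak2local_star_derivation_on_Mn_is_derivation_general {n : ℕ}
    (Δ : Matrix (Fin n) (Fin n) ℂ → Matrix (Fin n) (Fin n) ℂ)
    (hΔ : IsWeak2LocalStarDerivation Δ) :
    (∀ x y, Δ (x + y) = Δ x + Δ y) ∧
    (∀ (c : ℂ) (x), Δ (c • x) = c • Δ x) ∧
    (∀ x y, Δ (x * y) = Δ x * y + x * Δ y) := by
  have h := hΔ.isWeakTwoLocal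
  refine ⟨h.map_add, h.map_smul, h.toLinearMap.map_mul_of_isJordanDerivation ?_⟩
  exact h.toLinearMap.isJordanDerivation_of_map_mul_self fun x hx ↦
    h.map_mul_self_of_isSelfAdjoint hx

/-- Every weak-2-local *-derivation on `Mₙ(ℂ)` is linear and a derivation. -/
theorem weak2local_star_derivation_on_Mn_is_derivation {n : ℕ} (hn : 0 < n)
    (Δ : Matrix (Fin n) (Fin n) ℂ → Matrix (Fin n) (Fin n) ℂ)
    (hΔ : IsWeak2LocalStarDerivation Δ) :
    (∀ x y, Δ (x + y) = Δ x + Δ y) ∧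
    (∀ (c : ℂ) (x), Δ (c • x) = c • Δ x) ∧
    (∀ x y, Δ (x * y) = Δ x * y + x * Δ y) :=
  weak2local_star_derivation_on_Mn_is_derivation_general Δ hΔ
end

section
/- Every weak-2-local derivation Δ on the C*-algebra M₂(ℂ) of 2×2 complex matrices is a ℂ-linear map and a derivation, i.e. Δ(x + y) = Δ(x) + Δ(y), Δ(λx) = λΔ(x) and Δ(xy) = Δ(x)y + xΔ(y) for all x, y ∈ M₂(ℂ) and λ ∈ ℂ. -/
open scoped Matrix.Norms.L2Operator

/-- A (not necessarily linear) map `Δ` on `Mₙ(ℂ)` is a weak-2-local derivation if for all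
`a b` and every continuous linear functional `φ` there is a derivation `D` (bundled as a
`ℂ`-linear map satisfying the Leibniz rule) such that
`φ (Δ a) = φ (D a)` and `φ (Δ b) = φ (D b)`. -/
def IsWeak2LocalDerivation {n : ℕ} (Δ : Matrix (Fin n) (Fin n) ℂ → Matrix (Fin n) (Fin n) ℂ) :
    Prop :=
  ∀ (a b : Matrix (Fin n) (Fin n) ℂ) (φ : Matrix (Fin n) (Fin n) ℂ →L[ℂ] ℂ),
    ∃ D : Matrix (Fin n) (Fin n) ℂ →ₗ[ℂ] Matrix (Fin n) (Fin n) ℂ,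
      (∀ x y, D (x * y) = D x * y + x * D y) ∧
      φ (Δ a) = φ (D a) ∧ φ (Δ b) = φ (D b)

/-!
For a derivation `D` of `Mₙ(ℂ)`, the functional `tr ∘ D` kills commutators and `1`, hence vanishes;
in particular `tr (D c * c) = tr (D (c * c)) / 2 = 0`. Testing a weak-2-local derivation `Δ` against
the functionals `x ↦ tr (x * c)` for `c = x`, `c = x + y` and `c = 1` shows that
`(x, y) ↦ tr (Δ x * y)` is alternating and vanishes for `y = 1`. On `M₂(ℂ)` modulo scalars, which is
three-dimensional, such a form is determined by its values on the pairs from `E₁₁, E₁₂, E₂₁`, and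
these can be matched by the form `tr ((A * x - x * A) * y)` of an inner derivation. Hence
`Δ x = A * x - x * A`.
-/

theorem map_one_eq_zero_of_leibniz {A : Type*} [NonAssocRing A] {D : A → A}
    (hD : ∀ x y, D (x * y) = D x * y + x * D y) : D 1 = 0 := by
  simpa using hD 1 1

namespace Matrix

variable {ι R : Type*} [Fintype ι] [DecidableEq ι]

theorem eq_zero_of_map_mul_comm_of_map_one [Field R] [CharZero R] (f : Matrix ι ι R →ₗ[R] R)
    (hf : ∀ x y, f (x * y) = f (y * x)) (h1 : f 1 = 0) : f = 0 := by
  refine ext_linearMap (R := R) fun i j => LinearMap.ext_ring ?_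
  simp only [LinearMap.coe_comp, Function.comp_apply, singleLinearMap_apply, LinearMap.zero_apply]
  obtain rfl | hij := eq_or_ne i j
  · have hdiag : ∀ k, f (single k k 1) = f (single i i 1) := fun k => by
      simpa using hf (single k i 1) (single i k 1)
    have hcard : (Fintype.card ι : R) * f (single i i 1) = 0 := by
      simp [← h1, ← sum_single_one, map_sum, hdiag]
    have : Nonempty ι := ⟨i⟩
    exact (mul_eq_zero.1 hcard).resolve_left (Nat.cast_ne_zero.2 Fintype.card_ne_zero)
  · simpa [single_mul_single_of_ne (c := (1 : R)) i j i hij.symm] using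
      hf (single i i 1) (single i j 1)

theorem eq_zero_of_trace_mul_eq_zero [CommSemiring R] {Z : Matrix ι ι R} {T : Set (Matrix ι ι R)}
    (hT : Submodule.span R T = ⊤) (hZ : ∀ c ∈ T, (Z * c).trace = 0) : Z = 0 := by
  let f : Matrix ι ι R →ₗ[R] R := traceLinearMap ι R R ∘ₗ LinearMap.mulLeft R Z
  have hf : T ⊆ LinearMap.ker f := hZ
  rw [← Submodule.span_le, hT, top_le_iff, LinearMap.ker_eq_top] at hf
  exact ext_iff_trace_mul_right.2 fun c => by simpa [f] using LinearMap.congr_fun hf c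

theorem span_one_single_fin_two_eq_top [CommRing R] :
    Submodule.span R {1, single 0 0 1, single 0 1 1, single 1 0 1} =
      (⊤ : Submodule R (Matrix (Fin 2) (Fin 2) R)) := by
  refine Submodule.eq_top_iff'.2 fun x => ?_
  have hx : x = x 1 1 • 1 + (x 0 0 - x 1 1) • single 0 0 1 + x 0 1 • single 0 1 1
      + x 1 0 • single 1 0 1 := by
    ext i j; fin_cases i <;> fin_cases j <;> simp
  rw [hx]
  refine add_mem (add_mem (add_mem ?_ ?_) ?_) ?_ <;>
    exact Submodule.smul_mem _ _ (Submodule.subset_span (by simp))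

section Leibniz

variable [Field R] [CharZero R] (D : Matrix ι ι R →ₗ[R] Matrix ι ι R)
  (hD : ∀ x y, D (x * y) = D x * y + x * D y)
include hD

theorem trace_map_eq_zero_of_leibniz (x : Matrix ι ι R) : (D x).trace = 0 := by
  have hcomm (x y : Matrix ι ι R) : (D (x * y)).trace = (D (y * x)).trace := by
    rw [hD, hD, trace_add, trace_add, trace_mul_comm (D x), trace_mul_comm x, add_comm]
  have h := eq_zero_of_map_mul_comm_of_map_one (traceLinearMap ι R R ∘ₗ D) hcomm
    (by simp [map_one_eq_zero_of_leibniz hD])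
  simpa using LinearMap.congr_fun h x

theorem trace_map_mul_self_eq_zero_of_leibniz (x : Matrix ι ι R) : (D x * x).trace = 0 := by
  have h := trace_map_eq_zero_of_leibniz D hD (x * x)
  rw [hD, trace_add, trace_mul_comm x] at h
  linear_combination h / 2

end Leibniz

end Matrix

namespace IsWeak2LocalDerivation

open Matrix

variable {n : ℕ} {Δ : Matrix (Fin n) (Fin n) ℂ → Matrix (Fin n) (Fin n) ℂ}

noncomputable def traceMulRight (c : Matrix (Fin n) (Fin n) ℂ) : Matrix (Fin n) (Fin n) ℂ →L[ℂ] ℂ :=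
  LinearMap.toContinuousLinearMap (traceLinearMap _ ℂ ℂ ∘ₗ LinearMap.mulRight ℂ c)

@[simp]
theorem traceMulRight_apply (c x : Matrix (Fin n) (Fin n) ℂ) : traceMulRight c x = (x * c).trace :=
  rfl

theorem trace_apply (hΔ : IsWeak2LocalDerivation Δ) (x : Matrix (Fin n) (Fin n) ℂ) :
    (Δ x).trace = 0 := by
  obtain ⟨D, hD, hx, -⟩ := hΔ x x (traceMulRight 1)
  simp only [traceMulRight_apply, mul_one] at hx
  exact hx.trans (trace_map_eq_zero_of_leibniz D hD x)

theorem trace_apply_mul_self (hΔ : IsWeak2LocalDerivation Δ) (x : Matrix (Fin n) (Fin n) ℂ) :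
    (Δ x * x).trace = 0 := by
  obtain ⟨D, hD, hx, -⟩ := hΔ x x (traceMulRight x)
  simp only [traceMulRight_apply] at hx
  exact hx.trans (trace_map_mul_self_eq_zero_of_leibniz D hD x)

theorem trace_apply_mul_comm (hΔ : IsWeak2LocalDerivation Δ) (x y : Matrix (Fin n) (Fin n) ℂ) :
    (Δ x * y).trace = -(Δ y * x).trace := by
  obtain ⟨D, hD, hx, hy⟩ := hΔ x y (traceMulRight (x + y))
  simp only [traceMulRight_apply] at hx hy
  have hsum : (Δ x * (x + y)).trace + (Δ y * (x + y)).trace = 0 := by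
    rw [hx, hy, ← trace_add, ← add_mul, ← map_add]
    exact trace_map_mul_self_eq_zero_of_leibniz D hD (x + y)
  simp only [mul_add, trace_add, hΔ.trace_apply_mul_self] at hsum
  linear_combination hsum

theorem sub_commutator (hΔ : IsWeak2LocalDerivation Δ) (A : Matrix (Fin n) (Fin n) ℂ) :
    IsWeak2LocalDerivation fun x => Δ x - (A * x - x * A) := by
  intro a b φ
  obtain ⟨D, hD, ha, hb⟩ := hΔ a b φ
  refine ⟨D - (LinearMap.mulLeft ℂ A - LinearMap.mulRight ℂ A), fun x y => ?_, ?_, ?_⟩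
  · simp only [LinearMap.sub_apply, LinearMap.mulLeft_apply, LinearMap.mulRight_apply, hD]
    noncomm_ring
  · simp [ha]
  · simp [hb]

theorem eq_zero_of_trace_apply_mul_eq_zero (hΔ : IsWeak2LocalDerivation Δ)
    {S : Set (Matrix (Fin n) (Fin n) ℂ)} (hS : Submodule.span ℂ (insert 1 S) = ⊤)
    (hΔS : ∀ y ∈ S, ∀ c ∈ S, (Δ y * c).trace = 0) (x : Matrix (Fin n) (Fin n) ℂ) : Δ x = 0 := by
  have hS_ker : ∀ y ∈ S, Δ y = 0 := fun y hy =>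
    Matrix.eq_zero_of_trace_mul_eq_zero hS <| Set.forall_mem_insert.2
      ⟨by simpa using hΔ.trace_apply y, hΔS y hy⟩
  refine Matrix.eq_zero_of_trace_mul_eq_zero hS <| Set.forall_mem_insert.2
    ⟨by simpa using hΔ.trace_apply x, fun c hc => ?_⟩
  simp [hΔ.trace_apply_mul_comm x c, hS_ker c hc]

end IsWeak2LocalDerivation

open Matrix in
theorem IsWeak2LocalDerivation.exists_eq_commutator_of_fin_two
    {Δ : Matrix (Fin 2) (Fin 2) ℂ → Matrix (Fin 2) (Fin 2) ℂ} (hΔ : IsWeak2LocalDerivation Δ) :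
    ∃ A : Matrix (Fin 2) (Fin 2) ℂ, ∀ x, Δ x = A * x - x * A := by
  set E₁₁ : Matrix (Fin 2) (Fin 2) ℂ := single 0 0 1
  set E₁₂ : Matrix (Fin 2) (Fin 2) ℂ := single 0 1 1
  set E₂₁ : Matrix (Fin 2) (Fin 2) ℂ := single 1 0 1
  obtain ⟨A, hA₀₀, hA₀₁, hA₁₀, hA₁₁⟩ : ∃ A : Matrix (Fin 2) (Fin 2) ℂ,
      A 0 0 = Δ E₁₂ 0 1 ∧ A 0 1 = -Δ E₁₁ 0 1 ∧ A 1 0 = Δ E₁₁ 1 0 ∧ A 1 1 = 0 :=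
    ⟨!![Δ E₁₂ 0 1, -Δ E₁₁ 0 1; Δ E₁₁ 1 0, 0], rfl, rfl, rfl, rfl⟩
  have hΔ' := hΔ.sub_commutator A
  refine ⟨A, fun x =>
    sub_eq_zero.1 (hΔ'.eq_zero_of_trace_apply_mul_eq_zero span_one_single_fin_two_eq_top ?_ x)⟩
  have hE₁₁E₁₂ : ((Δ E₁₁ - (A * E₁₁ - E₁₁ * A)) * E₁₂).trace = 0 := by
    simp [E₁₁, E₁₂, sub_mul, trace_mul_single, hA₀₀, hA₁₀]
  have hE₁₁E₂₁ : ((Δ E₁₁ - (A * E₁₁ - E₁₁ * A)) * E₂₁).trace = 0 := by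
    simp [E₁₁, E₂₁, sub_mul, trace_mul_single, hA₀₁]
  have hE₁₂E₂₁ : ((Δ E₁₂ - (A * E₁₂ - E₁₂ * A)) * E₂₁).trace = 0 := by
    simp [E₁₂, E₂₁, sub_mul, trace_mul_single, hA₀₀, hA₁₁]
  have hswap {u v : Matrix (Fin 2) (Fin 2) ℂ} (h : ((Δ u - (A * u - u * A)) * v).trace = 0) :
      ((Δ v - (A * v - v * A)) * u).trace = 0 := by
    rw [hΔ'.trace_apply_mul_comm, h, neg_zero]
  simp only [Set.mem_insert_iff, Set.mem_singleton_iff]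
  rintro y (rfl | rfl | rfl) c (rfl | rfl | rfl)
  exacts [hΔ'.trace_apply_mul_self _, hE₁₁E₁₂, hE₁₁E₂₁, hswap hE₁₁E₁₂, hΔ'.trace_apply_mul_self _,
    hE₁₂E₂₁, hswap hE₁₁E₂₁, hswap hE₁₂E₂₁, hΔ'.trace_apply_mul_self _]

/-- Every weak-2-local derivation on `M₂(ℂ)` is linear and a derivation. -/
theorem weak2local_derivation_on_M2_is_derivation
    (Δ : Matrix (Fin 2) (Fin 2) ℂ → Matrix (Fin 2) (Fin 2) ℂ)
    (hΔ : IsWeak2LocalDerivation Δ) :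
    (∀ x y, Δ (x + y) = Δ x + Δ y) ∧
    (∀ (c : ℂ) (x), Δ (c • x) = c • Δ x) ∧
    (∀ x y, Δ (x * y) = Δ x * y + x * Δ y) := by
  obtain ⟨A, hA⟩ := hΔ.exists_eq_commutator_of_fin_two
  refine ⟨fun x y => ?_, fun c x => ?_, fun x y => ?_⟩
  · rw [hA, hA, hA]; noncomm_ring
  · rw [hA, hA, Matrix.mul_smul, Matrix.smul_mul, smul_sub]
  · rw [hA (x * y), hA x, hA y]; noncomm_ring
end

section
/- Let n be a positive natural number and let Δ : Mₙ(ℂ) → Mₙ(ℂ) be a weak-2-local derivation on the C*-algebra Mₙ(ℂ) of n×n complex matrices. Then the trace of Δ(x) is zero for every x ∈ Mₙ(ℂ). -/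
open scoped Matrix.Norms.L2Operator

/-!
Testing `Δ` against the trace functional reduces the claim to a single derivation `D`.
Since `tr (D (x * y)) = tr (D x * y) + tr (x * D y)` is symmetric in `x` and `y`, the functional
`f = tr ∘ D` is tracial, and a tracial functional on `Mₙ` satisfies `n • f x = tr x • f 1`
(it kills the off-diagonal matrix units and takes one common value on the diagonal ones).
As `D 1 = 0`, this gives `tr (D x) = 0`.
-/

namespace Matrix

section TraceLike

variable {n R M : Type*} [Fintype n] [DecidableEq n] [CommSemiring R] [AddCommMonoid M]
  [Module R M] {f : Matrix n n R →ₗ[R] M}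

theorem apply_single_eq_zero_of_apply_mul_comm (hf : ∀ x y, f (x * y) = f (y * x)) {i j : n}
    (hij : i ≠ j) (c : R) : f (single i j c) = 0 := by
  calc f (single i j c) = f (single i i 1 * single i j c) := by rw [single_mul_single_same, one_mul]
    _ = f (single i j c * single i i 1) := hf _ _
    _ = 0 := by rw [single_mul_single_of_ne (c := c) i j i hij.symm, map_zero]

theorem apply_single_same_eq_of_apply_mul_comm (hf : ∀ x y, f (x * y) = f (y * x)) (i j : n)
    (c : R) : f (single i i c) = f (single j j c) := by
  calc f (single i i c) = f (single i j c * single j i 1) := by rw [single_mul_single_same, mul_one]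
    _ = f (single j i 1 * single i j c) := hf _ _
    _ = f (single j j c) := by rw [single_mul_single_same, one_mul]

theorem card_smul_apply_single_same_of_apply_mul_comm (hf : ∀ x y, f (x * y) = f (y * x))
    (i : n) (c : R) : Fintype.card n • f (single i i c) = c • f 1 := by
  calc Fintype.card n • f (single i i c) = ∑ k : n, f (single k k c) := by
        rw [Finset.sum_congr rfl fun k _ => apply_single_same_eq_of_apply_mul_comm hf k i c,
          Finset.sum_const, Finset.card_univ]
    _ = c • f 1 := by rw [← map_sum, sum_single_eq_diagonal, ← smul_one_eq_diagonal, map_smul]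

theorem card_smul_apply_eq_trace_smul_apply_one (hf : ∀ x y, f (x * y) = f (y * x))
    (x : Matrix n n R) : Fintype.card n • f x = x.trace • f 1 := by
  conv_lhs => rw [matrix_eq_sum_single x]
  simp only [map_sum, Finset.smul_sum, trace, diag_apply, Finset.sum_smul]
  refine Finset.sum_congr rfl fun i _ => ?_
  rw [Finset.sum_eq_single i (fun j _ hji => by
      rw [apply_single_eq_zero_of_apply_mul_comm hf hji.symm, smul_zero]) (by simp)]
  exact card_smul_apply_single_same_of_apply_mul_comm hf i _

end TraceLike

theorem trace_apply_mul_comm_of_leibniz {n R : Type*} [Fintype n] [CommSemiring R]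
    {D : Matrix n n R → Matrix n n R} (hD : ∀ x y, D (x * y) = D x * y + x * D y)
    (x y : Matrix n n R) : (D (x * y)).trace = (D (y * x)).trace := by
  rw [hD, hD, trace_add, trace_add, trace_mul_comm, trace_mul_comm x, add_comm]

theorem trace_apply_eq_zero_of_leibniz {n R : Type*} [Fintype n] [DecidableEq n] [CommRing R]
    [IsDomain R] [CharZero R] (D : Matrix n n R →ₗ[R] Matrix n n R)
    (hD : ∀ x y, D (x * y) = D x * y + x * D y) (x : Matrix n n R) : (D x).trace = 0 := by
  have hD_one : D 1 = 0 := by simpa using hD 1 1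
  have h := card_smul_apply_eq_trace_smul_apply_one (f := traceLinearMap n R R ∘ₗ D)
    (trace_apply_mul_comm_of_leibniz hD) x
  simp only [LinearMap.comp_apply, traceLinearMap_apply, hD_one, trace_zero, smul_zero,
    smul_eq_zero, Fintype.card_eq_zero_iff] at h
  exact h.elim (fun _ => trace_eq_zero_of_isEmpty _) id

end Matrix

theorem trace_of_weak2local_derivation_eq_zero_general {n : ℕ}
    (Δ : Matrix (Fin n) (Fin n) ℂ → Matrix (Fin n) (Fin n) ℂ)
    (hΔ : IsWeak2LocalDerivation Δ) (x : Matrix (Fin n) (Fin n) ℂ) :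
    Matrix.trace (Δ x) = 0 := by
  obtain ⟨D, hD, hx, -⟩ :=
    hΔ x x (LinearMap.toContinuousLinearMap (Matrix.traceLinearMap (Fin n) ℂ ℂ))
  exact hx.trans (Matrix.trace_apply_eq_zero_of_leibniz D hD x)

/-- The image of any weak-2-local derivation on `Mₙ(ℂ)` consists of trace-zero matrices. -/
theorem trace_of_weak2local_derivation_eq_zero {n : ℕ} (hn : 0 < n)
    (Δ : Matrix (Fin n) (Fin n) ℂ → Matrix (Fin n) (Fin n) ℂ)
    (hΔ : IsWeak2LocalDerivation Δ) (x : Matrix (Fin n) (Fin n) ℂ) :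
    Matrix.trace (Δ x) = 0 :=
  trace_of_weak2local_derivation_eq_zero_general Δ hΔ x
end

section
/- Let n ≥ 2 be a natural number and let Δ : Mₙ(ℂ) → Mₙ(ℂ) be a weak-2-local *-derivation. Let p₁, …, pₙ be mutually orthogonal minimal projections in Mₙ(ℂ) (pᵢpⱼ = 0 for i ≠ j) and set q = p₁ + … + p_{n−1}. Then for all real numbers λ₁, …, λₙ and every a ∈ Mₙ(ℂ) with a* = a and a = q a pₙ + pₙ a q, one has Δ(∑_{j=1}^{n} λⱼ pⱼ + a) = ∑_{j=1}^{n} λⱼ Δ(pⱼ) + Δ(a). Moreover, the restriction of Δ to the set of self-adjoint elements a with a = q a pₙ + pₙ a q is additive and real-homogeneous. -/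
open scoped Matrix.Norms.L2Operator

/-- A projection `p` in `Mₙ(ℂ)` is minimal if `p ≠ 0` and `pMₙ(ℂ)p = ℂp`. -/
def IsMinimalProjection {n : ℕ} (p : Matrix (Fin n) (Fin n) ℂ) : Prop :=
  star p = p ∧ p * p = p ∧ p ≠ 0 ∧ ∀ x, ∃ c : ℂ, p * x * p = c • p

/-!
A derivation `D` of a full matrix algebra satisfies `tr (D u) = 0` and `tr (D h * h) = 0`.
Testing weak-2-locality at `x, y` against the functional `tr (· * (x + y))` therefore gives
`tr (Δ x * y) = - tr (Δ y * x)`. The right-hand side is linear in `x`, and the trace pairing is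
nondegenerate, so a weak-2-local *-derivation of `Mₙ(ℂ)` is linear; the theorem follows.
-/

namespace Matrix

variable {m R : Type*} [Fintype m] [CommRing R] {D : Matrix m m R →ₗ[R] Matrix m m R}

theorem trace_derivation_mul_comm (hD : ∀ x y, D (x * y) = D x * y + x * D y)
    (x y : Matrix m m R) : (D (x * y)).trace = (D (y * x)).trace := by
  rw [hD, hD, trace_add, trace_add, trace_mul_comm x, trace_mul_comm (D x), add_comm]

theorem trace_derivation_eq_zero_of_isIdempotentElem (hD : ∀ x y, D (x * y) = D x * y + x * D y)
    {e : Matrix m m R} (he : IsIdempotentElem e) : (D e).trace = 0 := by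
  have hDe : D e = D e * e + e * D e := by simpa only [he.eq] using hD e e
  have hcorner : e * D e * e = 0 := by
    have : e * D e * e = e * D e * e + e * D e * e :=
      calc e * D e * e = e * (D e * e + e * D e) * e := by rw [← hDe]
        _ = e * D e * (e * e) + (e * e) * D e * e := by noncomm_ring
        _ = e * D e * e + e * D e * e := by rw [he.eq]
    simpa using this
  have hleft : (D e * e).trace = 0 :=
    calc (D e * e).trace = (D e * e * e).trace := by rw [mul_assoc, he.eq]
      _ = (e * D e * e).trace := by rw [trace_mul_comm, ← mul_assoc]
      _ = 0 := by rw [hcorner, trace_zero]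
  rw [hDe, trace_add, trace_mul_comm e, hleft, add_zero]

variable [DecidableEq m]

theorem trace_derivation_eq_zero (hD : ∀ x y, D (x * y) = D x * y + x * D y)
    (u : Matrix m m R) : (D u).trace = 0 := by
  induction u using Matrix.induction_on' with
  | h_zero => rw [map_zero, trace_zero]
  | h_add u v hu hv => rw [map_add, trace_add, hu, hv, add_zero]
  | h_std_basis i j c =>
    by_cases hij : i = j
    · subst hij
      have hidem : IsIdempotentElem (single i i (1 : R)) := by
        simp [IsIdempotentElem]
      rw [show single i i c = c • single i i 1 by simp, map_smul, trace_smul,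
        trace_derivation_eq_zero_of_isIdempotentElem hD hidem, smul_zero]
    · calc (D (single i j c)).trace = (D (single i i 1 * single i j c)).trace := by simp
        _ = (D (single i j c * single i i 1)).trace := trace_derivation_mul_comm hD _ _
        _ = 0 := by simp [Ne.symm hij]

theorem trace_derivation_mul_self [NoZeroDivisors R] [CharZero R]
    (hD : ∀ x y, D (x * y) = D x * y + x * D y) (h : Matrix m m R) :
    (D h * h).trace = 0 := by
  have h2 := trace_derivation_eq_zero hD (h * h)
  rwa [hD, trace_add, trace_mul_comm h, add_self_eq_zero] at h2

end Matrix

namespace IsWeak2LocalStarDerivation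

open Matrix

variable {n : ℕ} {Δ : Matrix (Fin n) (Fin n) ℂ → Matrix (Fin n) (Fin n) ℂ}

theorem trace_mul_self (hΔ : IsWeak2LocalStarDerivation Δ) (x : Matrix (Fin n) (Fin n) ℂ) :
    (Δ x * x).trace = 0 := by
  obtain ⟨D, hD, -, hx, -⟩ := hΔ x x
    (LinearMap.toContinuousLinearMap ((traceLinearMap _ ℂ ℂ).comp (LinearMap.mulRight ℂ x)))
  change (Δ x * x).trace = (D x * x).trace at hx
  rw [hx, trace_derivation_mul_self hD]

theorem trace_mul_add (hΔ : IsWeak2LocalStarDerivation Δ) (x y : Matrix (Fin n) (Fin n) ℂ) :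
    (Δ x * (x + y)).trace = -(Δ y * (x + y)).trace := by
  obtain ⟨D, hD, -, hx, hy⟩ := hΔ x y
    (LinearMap.toContinuousLinearMap ((traceLinearMap _ ℂ ℂ).comp (LinearMap.mulRight ℂ (x + y))))
  change (Δ x * (x + y)).trace = (D x * (x + y)).trace at hx
  change (Δ y * (x + y)).trace = (D y * (x + y)).trace at hy
  have hsum := trace_derivation_mul_self hD (x + y)
  rw [map_add, add_mul, trace_add] at hsum
  rw [hx, hy]
  linear_combination hsum

theorem trace_mul_eq_neg (hΔ : IsWeak2LocalStarDerivation Δ) (x y : Matrix (Fin n) (Fin n) ℂ) :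
    (Δ x * y).trace = -(Δ y * x).trace := by
  have h := hΔ.trace_mul_add x y
  rw [mul_add, mul_add, trace_add, trace_add, hΔ.trace_mul_self, hΔ.trace_mul_self] at h
  linear_combination h

theorem map_add (hΔ : IsWeak2LocalStarDerivation Δ) (x y : Matrix (Fin n) (Fin n) ℂ) :
    Δ (x + y) = Δ x + Δ y := by
  refine ext_iff_trace_mul_right.mpr fun v => ?_
  rw [add_mul, trace_add, hΔ.trace_mul_eq_neg (x + y), hΔ.trace_mul_eq_neg x,
    hΔ.trace_mul_eq_neg y, mul_add, trace_add, neg_add]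

theorem map_smul (hΔ : IsWeak2LocalStarDerivation Δ) (c : ℂ) (x : Matrix (Fin n) (Fin n) ℂ) :
    Δ (c • x) = c • Δ x := by
  refine ext_iff_trace_mul_right.mpr fun v => ?_
  rw [smul_mul, trace_smul, hΔ.trace_mul_eq_neg (c • x), hΔ.trace_mul_eq_neg x, Matrix.mul_smul,
    trace_smul, smul_eq_mul, smul_eq_mul, mul_neg]

theorem isLinearMap (hΔ : IsWeak2LocalStarDerivation Δ) : IsLinearMap ℂ Δ :=
  ⟨hΔ.map_add, hΔ.map_smul⟩

end IsWeak2LocalStarDerivation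

/-- For a weak-2-local *-derivation `Δ` on `Mₙ(ℂ)`, mutually orthogonal minimal projections
`p₁, …, pₙ`, `q = p₁ + ⋯ + p_{n-1}`, real scalars `λⱼ` and self-adjoint
`a = q a pₙ + pₙ a q`, one has `Δ(∑ λⱼ pⱼ + a) = ∑ λⱼ Δ(pⱼ) + Δ(a)`; moreover `Δ` is
additive and real-homogeneous on the set of such self-adjoint elements `a`. -/
theorem weak2LocalStarDerivation_add_selfAdjoint_corner {n : ℕ} (hn : 2 ≤ n)
    (Δ : Matrix (Fin n) (Fin n) ℂ → Matrix (Fin n) (Fin n) ℂ)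
    (hΔ : IsWeak2LocalStarDerivation Δ)
    (p : Fin n → Matrix (Fin n) (Fin n) ℂ)
    (q : Matrix (Fin n) (Fin n) ℂ) :
    (∀ (l : Fin n → ℝ) (a : Matrix (Fin n) (Fin n) ℂ), star a = a →
        a = q * a * p ⟨n - 1, by omega⟩ + p ⟨n - 1, by omega⟩ * a * q →
          Δ (∑ j, (l j : ℂ) • p j + a) = ∑ j, (l j : ℂ) • Δ (p j) + Δ a) ∧
    (∀ a b : Matrix (Fin n) (Fin n) ℂ, star a = a → star b = b →
        a = q * a * p ⟨n - 1, by omega⟩ + p ⟨n - 1, by omega⟩ * a * q →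
        b = q * b * p ⟨n - 1, by omega⟩ + p ⟨n - 1, by omega⟩ * b * q →
          Δ (a + b) = Δ a + Δ b) ∧
    (∀ (r : ℝ) (a : Matrix (Fin n) (Fin n) ℂ), star a = a →
        a = q * a * p ⟨n - 1, by omega⟩ + p ⟨n - 1, by omega⟩ * a * q →
          Δ ((r : ℂ) • a) = (r : ℂ) • Δ a) := by
  let L := IsLinearMap.mk' Δ hΔ.isLinearMap
  refine ⟨fun l a _ _ => ?_, fun a b _ _ _ _ => hΔ.map_add a b,
    fun r a _ _ => hΔ.map_smul r a⟩
  simpa [L] using L.map_add (∑ j, (l j : ℂ) • p j) a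
end
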